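/- In a rotationally asymmetric configuration of finitely many distinct points on a circle, if a point r other than the true leader is an undecided leader, then the antipodal position of r is occupied by a point of the configuration. -/

import Mathlib

open Real
open scoped Classical

noncomputable section

/-- Clockwise angular distance from `p` to `q`, a real number in `[0, 2π)`. -/
def cw (p q : Real.Angle) : ℝ :=
  if 0 ≤ (q - p).toReal then (q - p).toReal else (q - p).toReal + 2 * π

/-- The sorted list of clockwise distances from `p` to the points of `S`. -/
def dists (S : Finset Real.Angle) (p : Real.Angle) : List ℝ :=
  (S.image (cw p)).sort (· ≤ ·)

/-- The clockwise angular-gap sequence of `p` with respect to the configuration `S`: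
the sequence of clockwise gaps between consecutive points, starting from `p`. -/
def gapSeq (S : Finset Real.Angle) (p : Real.Angle) : List ℝ :=
  List.zipWith (fun a b => a - b) ((dists S p).tail ++ [2 * π]) (dists S p)

/-- Lexicographic strict order on lists of reals. -/
def lexLt (a b : List ℝ) : Prop := List.Lex (· < ·) a b

/-- `L` is the true leader of `S`: its angular-gap sequence is lexicographically
strictly smallest. -/
def TrueLeader (S : Finset Real.Angle) (L : Real.Angle) : Prop :=
  L ∈ S ∧ ∀ r ∈ S, r ≠ L → lexLt (gapSeq S L) (gapSeq S r)

/-- `S` is rotationally asymmetric: no nontrivial rotation about the center fixes `S`. -/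
def RotAsym (S : Finset Real.Angle) : Prop :=
  ∀ θ : Real.Angle, θ ≠ 0 → S.image (· + θ) ≠ S

/-- The antipodal position of a point on the circle. -/
def antipode (p : Real.Angle) : Real.Angle := p + (π : Real.Angle)

/-- The hypothetical configuration in which the antipode of `r` is unoccupied. -/
def C0 (S : Finset Real.Angle) (r : Real.Angle) : Finset Real.Angle := S.erase (antipode r)

/-- The hypothetical configuration in which the antipode of `r` is occupied. -/
def C1 (S : Finset Real.Angle) (r : Real.Angle) : Finset Real.Angle := insert (antipode r) S

/-- `r` is an undecided leader: both hypothetical configurations are rotationally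
asymmetric and `r` is the true leader of exactly one of them. -/
def Undecided (S : Finset Real.Angle) (r : Real.Angle) : Prop :=
  r ∈ S ∧ RotAsym (C0 S r) ∧ RotAsym (C1 S r) ∧
    Xor' (TrueLeader (C0 S r) r) (TrueLeader (C1 S r) r)

/-- `r` is a cognizant leader: `r` is the true leader in every consistent
(hypothetical) configuration. -/
def Cognizant (S : Finset Real.Angle) (r : Real.Angle) : Prop :=
  r ∈ S ∧ (RotAsym (C0 S r) → TrueLeader (C0 S r) r) ∧
    (RotAsym (C1 S r) → TrueLeader (C1 S r) r)

/-- An expected leader is a cognizant leader or an undecided leader. -/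
def ExpectedLeader (S : Finset Real.Angle) (r : Real.Angle) : Prop :=
  Cognizant S r ∨ Undecided S r

/-!
Compare two points by their sets of clockwise distances to the configuration: `p` precedes `q`
(`FirstDiff`) when the least distance at which exactly one of them sees a point is seen by `p`.
For points of the configuration this is the lexicographic order of their gap sequences.

If the antipode `a` of `r` were empty, the configuration without `a` would be `S`, which `L` leads,
so `r` would have to lead `S ∪ {a}`. Let `L` precede `r` first at distance `m` in `S`, and let
`x` be the distance from `L` to `a`; adding `a` adds `π` to the distances seen from `r` and `x` to
those seen from `L`. If `min x m < π`, then `L` still precedes `r`. Otherwise `L = r - e` with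
`e = x - π ∈ [0, π)`, and the distances seen from `r` and `L` agree below `π`, so `r` can only
precede `L` at some `β ≥ π`. Rotating by `e` turns this into: `r + e` precedes `r` at `β - e`;
and `r + e` lies in `S` because `L + e = r` does and `e < π ≤ m`.
-/

section FirstDiff

variable {α : Type*} [LinearOrder α]

def FirstDiff (X Y : Set α) (w : α) : Prop :=
  w ∈ X ∧ w ∉ Y ∧ ∀ t < w, (t ∈ X ↔ t ∈ Y)

theorem FirstDiff.asymm {X Y : Set α} {w w' : α} (h : FirstDiff X Y w) :
    ¬ FirstDiff Y X w' := by
  intro h'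
  rcases lt_trichotomy w w' with hlt | rfl | hlt
  · exact h.2.1 ((h'.2.2 w hlt).2 h.1)
  · exact h.2.1 h'.1
  · exact h'.2.1 ((h.2.2 w' hlt).2 h'.1)

theorem FirstDiff.insert_insert {X Y : Set α} {m x y : α} (h : FirstDiff X Y m) (hx : x ∉ X)
    (hy : min x m < y) : FirstDiff (insert x X) (insert y Y) (min x m) := by
  obtain ⟨hmX, hmY, hagree⟩ := h
  refine ⟨?_, ?_, fun t ht => ?_⟩
  · rcases min_choice x m with h | h <;> rw [h]
    exacts [Set.mem_insert x X, Set.mem_insert_of_mem x hmX]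
  · rintro (h | h)
    · exact hy.ne h
    · rcases (min_le_right x m).lt_or_eq with hlt | heq
      · have hxm : min x m = x := min_eq_left (min_lt_iff.1 hlt |>.resolve_right (lt_irrefl m)).le
        exact hx (hxm ▸ (hagree _ hlt).2 h)
      · exact hmY (heq ▸ h)
  · have htx : t ≠ x := (ht.trans_le (min_le_left x m)).ne
    have hty : t ≠ y := (ht.trans hy).ne
    simp only [Set.mem_insert_iff, htx, hty, false_or]
    exact hagree t (ht.trans_le (min_le_right x m))

theorem List.Lex.exists_firstDiff {l₁ l₂ : List α} (h : List.Lex (· < ·) l₁ l₂)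
    (h₁ : l₁.Pairwise (· < ·)) (h₂ : l₂.Pairwise (· < ·)) (hlen : l₁.length = l₂.length) :
    ∃ w, FirstDiff {t | t ∈ l₁} {t | t ∈ l₂} w := by
  induction h with
  | nil => simp at hlen
  | @cons a l₁ l₂ _ ih =>
    rw [List.pairwise_cons] at h₁ h₂
    obtain ⟨w, hw₁, hw₂, hagree⟩ := ih h₁.2 h₂.2 (by simpa using hlen)
    have haw : a < w := h₁.1 w hw₁
    refine ⟨w, List.mem_cons_of_mem a hw₁, ?_, fun t ht => ?_⟩
    · simpa [haw.ne'] using hw₂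
    · simpa using or_congr_right (hagree t ht)
  | @rel a l₁ b l₂ hab =>
    rw [List.pairwise_cons] at h₁ h₂
    refine ⟨a, List.mem_cons_self, ?_, fun t ht => ?_⟩
    · rintro (_ | ⟨_, ha⟩)
      · exact lt_irrefl a hab
      · exact (h₂.1 a ha).not_gt hab
    · have htb : t < b := ht.trans hab
      refine iff_of_false (fun h => ?_) (fun h => ?_)
      · rcases List.mem_cons.1 h with rfl | h
        exacts [lt_irrefl t ht, (h₁.1 t h).not_gt ht]
      · rcases List.mem_cons.1 h with rfl | h
        exacts [lt_irrefl t htb, (h₂.1 t h).not_gt htb]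

theorem List.Pairwise.exists_eq_cons_of_forall_le {l : List α} (hl : l.Pairwise (· ≤ ·)) {x : α}
    (hx : x ∈ l) (hmin : ∀ y ∈ l, x ≤ y) : ∃ t, l = x :: t := by
  obtain ⟨a, t, rfl⟩ := List.exists_cons_of_ne_nil (List.ne_nil_of_mem hx)
  refine ⟨t, ?_⟩
  rcases List.mem_cons.1 hx with rfl | hxt
  · rfl
  · rw [le_antisymm ((List.pairwise_cons.1 hl).1 x hxt) (hmin a List.mem_cons_self)]

end FirstDiff

def gaps (M : ℝ) (l : List ℝ) : List ℝ :=
  List.zipWith (fun a b => a - b) (l.tail ++ [M]) l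

theorem lex_of_lex_gaps_cons {M x : ℝ} :
    ∀ {a b : List ℝ}, a.length = b.length →
      List.Lex (· < ·) (gaps M (x :: a)) (gaps M (x :: b)) → List.Lex (· < ·) a b
  | [], [], _, h => absurd ((List.lex_singleton_iff _ _).1 h) (lt_irrefl _)
  | y :: a, z :: b, hlen, h => by
    change List.Lex (· < ·) ((y - x) :: gaps M (y :: a)) ((z - x) :: gaps M (z :: b)) at h
    rcases List.cons_lex_cons_iff.1 h with hlt | ⟨heq, h⟩
    · exact .rel (by linarith)
    · obtain rfl : y = z := by linarith
      exact .cons (lex_of_lex_gaps_cons (by simpa using hlen) h)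

theorem Real.Angle.coe_eq_coe_iff_of_mem_Ico {s t : ℝ} (hs : s ∈ Set.Ico 0 (2 * π))
    (ht : t ∈ Set.Ico 0 (2 * π)) : (s : Real.Angle) = t ↔ s = t :=
  haveI : Fact (0 < 2 * π) := ⟨two_pi_pos⟩
  AddCircle.coe_eq_coe_iff_of_mem_Ico (a := 0) (by simpa using hs) (by simpa using ht)

theorem cw_mem_Ico (p q : Real.Angle) : cw p q ∈ Set.Ico 0 (2 * π) := by
  have h₁ := Real.Angle.neg_pi_lt_toReal (q - p)
  have h₂ := Real.Angle.toReal_le_pi (q - p)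
  unfold cw
  split_ifs with h <;> constructor <;> linarith [pi_pos]

theorem add_cw (p q : Real.Angle) : p + cw p q = q := by
  have hcoe : ((cw p q : ℝ) : Real.Angle) = q - p := by
    unfold cw
    split_ifs
    · exact Real.Angle.coe_toReal _
    · rw [Real.Angle.coe_add, Real.Angle.coe_two_pi, add_zero, Real.Angle.coe_toReal]
  rw [hcoe, add_sub_cancel]

theorem eq_cw_iff {p q : Real.Angle} {t : ℝ} : t = cw p q ↔ t ∈ Set.Ico 0 (2 * π) ∧ p + t = q := by
  refine ⟨by rintro rfl; exact ⟨cw_mem_Ico p q, add_cw p q⟩, fun ⟨ht, hq⟩ => ?_⟩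
  rw [← Real.Angle.coe_eq_coe_iff_of_mem_Ico ht (cw_mem_Ico p q)]
  exact add_left_cancel (hq.trans (add_cw p q).symm)

theorem cw_antipode (r : Real.Angle) : cw r (antipode r) = π :=
  (eq_cw_iff.2 ⟨⟨pi_pos.le, by linarith [pi_pos]⟩, rfl⟩).symm

def distSet (C : Finset Real.Angle) (q : Real.Angle) : Set ℝ :=
  {t | t ∈ Set.Ico 0 (2 * π) ∧ q + t ∈ C}

theorem cw_mem_distSet_iff {C : Finset Real.Angle} {q a : Real.Angle} :
    cw q a ∈ distSet C q ↔ a ∈ C := by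
  simp only [distSet, Set.mem_ofPred_eq, add_cw, cw_mem_Ico, true_and]

theorem distSet_insert (C : Finset Real.Angle) (q a : Real.Angle) :
    distSet (insert a C) q = insert (cw q a) (distSet C q) := by
  ext t
  simp only [distSet, Set.mem_ofPred_eq, Set.mem_insert_iff, Finset.mem_insert, eq_cw_iff]
  tauto

theorem mem_dists_iff {C : Finset Real.Angle} {q : Real.Angle} {t : ℝ} :
    t ∈ dists C q ↔ t ∈ distSet C q := by
  simp only [dists, Finset.mem_sort, Finset.mem_image, distSet, Set.mem_ofPred_eq]
  constructor
  · rintro ⟨a, ha, rfl⟩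
    exact ⟨cw_mem_Ico q a, by rwa [add_cw]⟩
  · rintro ⟨ht, hC⟩
    exact ⟨q + t, hC, (eq_cw_iff.2 ⟨ht, rfl⟩).symm⟩

theorem length_dists (C : Finset Real.Angle) (q : Real.Angle) : (dists C q).length = C.card := by
  rw [dists, Finset.length_sort, Finset.card_image_of_injective]
  intro a b h
  rw [← add_cw q a, h, add_cw]

theorem exists_dists_eq_zero_cons {C : Finset Real.Angle} {q : Real.Angle} (hq : q ∈ C) :
    ∃ l, dists C q = 0 :: l := by
  refine (Finset.pairwise_sort _ _).exists_eq_cons_of_forall_le ?_ fun y hy => ?_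
  · exact mem_dists_iff.2 ⟨⟨le_rfl, two_pi_pos⟩, by simpa using hq⟩
  · exact (mem_dists_iff.1 hy).1.1

theorem TrueLeader.exists_firstDiff {C : Finset Real.Angle} {L : Real.Angle} (hL : TrueLeader C L)
    {q : Real.Angle} (hq : q ∈ C) (hqL : q ≠ L) : ∃ w, FirstDiff (distSet C L) (distSet C q) w := by
  obtain ⟨a, ha⟩ := exists_dists_eq_zero_cons hL.1
  obtain ⟨b, hb⟩ := exists_dists_eq_zero_cons hq
  have hlen : a.length = b.length := by
    simpa [ha, hb, length_dists] using (length_dists C L).trans (length_dists C q).symm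
  have hlex : List.Lex (· < ·) (dists C L) (dists C q) := by
    have h : List.Lex (· < ·) (gaps (2 * π) (dists C L)) (gaps (2 * π) (dists C q)) :=
      hL.2 q hq hqL
    rw [ha, hb] at h ⊢
    exact List.Lex.cons (lex_of_lex_gaps_cons hlen h)
  have hsets : ∀ p, distSet C p = {t | t ∈ dists C p} := fun p => by
    ext t; exact mem_dists_iff.symm
  rw [hsets, hsets]
  exact hlex.exists_firstDiff (Finset.sortedLT_sort _).pairwise
    (Finset.sortedLT_sort _).pairwise (by rw [length_dists, length_dists])

theorem TrueLeader.unique {C : Finset Real.Angle} {L L' : Real.Angle} (hL : TrueLeader C L)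
    (hL' : TrueLeader C L') : L' = L := by
  by_contra hne
  obtain ⟨w, hw⟩ := hL.exists_firstDiff hL'.1 hne
  obtain ⟨w', hw'⟩ := hL'.exists_firstDiff hL.1 (Ne.symm hne)
  exact hw.asymm hw'

theorem firstDiff_distSet_add {C : Finset Real.Angle} {q : Real.Angle} {e β : ℝ}
    (h : FirstDiff (distSet C q) (distSet C (q - e)) β) (he : 0 ≤ e) (heβ : e ≤ β) :
    FirstDiff (distSet C (q + e)) (distSet C q) (β - e) := by
  obtain ⟨⟨⟨-, hβ2π⟩, hqβ⟩, hβ, hagree⟩ := h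
  have hIco : β - e ∈ Set.Ico 0 (2 * π) := ⟨by linarith, by linarith⟩
  refine ⟨⟨hIco, by simpa using hqβ⟩, fun ⟨_, hC⟩ => hβ ⟨⟨by linarith, hβ2π⟩, ?_⟩, fun t ht => ?_⟩
  · rwa [sub_add_eq_add_sub, add_sub_assoc, ← Real.Angle.coe_sub]
  · by_cases ht0 : t < 0
    · exact iff_of_false (fun h => ht0.not_ge h.1.1) (fun h => ht0.not_ge h.1.1)
    have htIco : t ∈ Set.Ico 0 (2 * π) := ⟨not_lt.1 ht0, by linarith⟩
    have hte : t + e ∈ Set.Ico 0 (2 * π) := ⟨by linarith, by linarith⟩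
    have := hagree (t + e) (by linarith)
    simp only [distSet, Set.mem_ofPred_eq, htIco, hte, true_and, Real.Angle.coe_add] at this ⊢
    rwa [show q - e + (t + e) = q + t by abel, show q + (t + e) = q + e + t by abel] at this

theorem not_trueLeader_insert_antipode {C : Finset Real.Angle} {r L : Real.Angle} (hr : r ∈ C)
    (ha : antipode r ∉ C) (hL : TrueLeader C L) (hrL : r ≠ L) :
    ¬ TrueLeader (insert (antipode r) C) r := by
  intro hr'
  set C' := insert (antipode r) C
  obtain ⟨m, hm⟩ := hL.exists_firstDiff hr hrL
  set x := cw L (antipode r)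
  have hD : ∀ q, distSet C' q = insert (cw q (antipode r)) (distSet C q) :=
    fun q => distSet_insert C q (antipode r)
  have hleads : ∀ p ∈ C', p ≠ r → ∃ w, FirstDiff (distSet C' r) (distSet C' p) w :=
    fun p hp hpr => hr'.exists_firstDiff hp hpr
  by_cases hlow : min x m < π
  · obtain ⟨w, hw⟩ := hleads L (Finset.mem_insert_of_mem hL.1) hrL.symm
    have hx : x ∉ distSet C L := cw_mem_distSet_iff.not.2 ha
    have := hm.insert_insert hx hlow
    rw [← cw_antipode r, ← hD, ← hD] at this
    exact hw.asymm this
  obtain ⟨hxπ, hmπ⟩ := le_min_iff.1 (not_lt.1 hlow)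
  set e := x - π
  have he : e ∈ Set.Ico 0 π := ⟨by linarith, by linarith [(cw_mem_Ico L (antipode r)).2]⟩
  have hLe : L = r - e := by
    rw [Real.Angle.coe_sub, sub_sub_eq_add_sub, ← antipode, ← add_cw L (antipode r)]
    abel
  have hagree : ∀ t < π, t ∈ distSet C' r ↔ t ∈ distSet C' L := fun t ht => by
    rw [hD, hD, cw_antipode, Set.mem_insert_iff, Set.mem_insert_iff, or_iff_right ht.ne,
      or_iff_right (ht.trans_le hxπ).ne]
    exact (hm.2.2 t (ht.trans_le hmπ)).symm
  have hre : r + e ∈ C := by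
    have heL : e ∈ distSet C L :=
      ⟨⟨he.1, by linarith [he.2, pi_pos]⟩, by rw [hLe, sub_add_cancel]; exact hr⟩
    exact ((hm.2.2 e (he.2.trans_le hmπ)).1 heL).2
  have hre_ne : r + e ≠ r := fun h => hrL (by rw [hLe, add_eq_left.1 h, sub_zero])
  obtain ⟨β, hβ⟩ := hleads L (Finset.mem_insert_of_mem hL.1) hrL.symm
  have hπβ : π ≤ β := not_lt.1 fun h => hβ.2.1 ((hagree β h).1 hβ.1)
  rw [hLe] at hβ
  obtain ⟨w, hw⟩ := hleads (r + e) (Finset.mem_insert_of_mem hre) hre_ne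
  exact hw.asymm (firstDiff_distSet_add hβ he.1 (by linarith [he.2]))

theorem stmt8_general (S : Finset Real.Angle)
    (L : Real.Angle) (hL : TrueLeader S L)
    (r : Real.Angle) (hr : r ∈ S) (hrL : r ≠ L) (hU : Undecided S r) :
    antipode r ∈ S := by
  by_contra ha
  rcases hU.2.2.2 with ⟨h₀, -⟩ | ⟨h₁, -⟩
  · rw [C0, Finset.erase_eq_of_notMem ha] at h₀
    exact hrL (hL.unique h₀)
  · exact not_trueLeader_insert_antipode hr ha hL hrL h₁

theorem stmt8 (S : Finset Real.Angle) (hasym : RotAsym S)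
    (L : Real.Angle) (hL : TrueLeader S L)
    (r : Real.Angle) (hr : r ∈ S) (hrL : r ≠ L) (hU : Undecided S r) :
    antipode r ∈ S :=
  stmt8_general S L hL r hr hrL hU
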